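/- Let A be a bialgebra and M a vector space such that A ⊕ M carries a bialgebra structure for which the projection p : A ⊕ M → A is a bialgebra morphism and p is an abelian group object in the category of bialgebras over A (equivalently, the restricted multiplication M ⊗ M → M and restricted comultiplication M → M ⊗ M vanish). Then M inherits an A-bimodule structure and an A-bicomodule structure from the multiplication and comultiplication of A ⊕ M, and the left A-action on M is compatible with the left A-coaction via the bialgebra axiom on A ⊕ M (i.e., M is an A-tetramodule). -/

import Mathlib

open scoped TensorProduct

section defs

variable (k A M : Type*) [Field k] [Ring A] [Algebra k A]
  [AddCommGroup M] [Module k M]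

variable {k A M}

/-- The multiplication induced on `P ⊗ P` by a bilinear multiplication on `P`. -/
noncomputable def tensorSquareMul
    {P : Type*} [AddCommGroup P] [Module k P]
    (mul : P →ₗ[k] P →ₗ[k] P) :
    (P ⊗[k] P) →ₗ[k] (P ⊗[k] P) →ₗ[k] (P ⊗[k] P) :=
  TensorProduct.lift
    (((TensorProduct.mapBilinear (RingHom.id k) P P P P) ∘ₗ mul).compl₂ mul)

/-- The left action of `A` on `M` extracted from a multiplication on `A ⊕ M`:
`a · m := pr_M ((a,0)·(0,m))`. -/
noncomputable def leftAct
    (mul : (A × M) →ₗ[k] (A × M) →ₗ[k] (A × M)) : A →ₗ[k] M →ₗ[k] M :=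
  ((mul ∘ₗ LinearMap.inl k A M).compl₂ (LinearMap.inr k A M)).compr₂
    (LinearMap.snd k A M)

/-- The right action of `A` on `M`: `m · a := pr_M ((0,m)·(a,0))`. -/
noncomputable def rightAct
    (mul : (A × M) →ₗ[k] (A × M) →ₗ[k] (A × M)) : M →ₗ[k] A →ₗ[k] M :=
  ((mul ∘ₗ LinearMap.inr k A M).compl₂ (LinearMap.inl k A M)).compr₂
    (LinearMap.snd k A M)

/-- The left coaction of `A` on `M` extracted from a comultiplication on `A ⊕ M`. -/
noncomputable def leftCoact
    (com : (A × M) →ₗ[k] ((A × M) ⊗[k] (A × M))) : M →ₗ[k] (A ⊗[k] M) :=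
  (TensorProduct.map (LinearMap.fst k A M) (LinearMap.snd k A M)) ∘ₗ
    com ∘ₗ (LinearMap.inr k A M)

/-- The action of `A ⊗ A` on `A ⊗ M`: `(a₁ ⊗ a₂)·(b ⊗ m) = a₁b ⊗ a₂·m`. -/
noncomputable def tensorAct
    (mul : (A × M) →ₗ[k] (A × M) →ₗ[k] (A × M)) :
    (A ⊗[k] A) →ₗ[k] (A ⊗[k] M) →ₗ[k] (A ⊗[k] M) :=
  TensorProduct.lift
    (((TensorProduct.mapBilinear (RingHom.id k) A M A M) ∘ₗ (LinearMap.mul k A)).compl₂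
      (leftAct mul))

end defs

/-!
Everything is read off by projecting the structure maps of `A × M` onto components. As `pr_A`
is multiplicative and `M · M = 0`, the `M`-component of `x · (0, m)` is `x.1 · m`, so it only
sees `x.1`; associativity of `A × M` then becomes the bimodule axioms. As `pr_A` is
comultiplicative, `Δ(0, m)` has no `A ⊗ A`-component, so projecting coassociativity and
`Δ((a, 0) · (0, m)) = Δ(a, 0) · Δ(0, m)` onto the `A ⊗ A ⊗ M`- resp. `A ⊗ M`-components only
involves the `A ⊗ M`-component of `Δ(0, m)`, which is the coaction.
-/

open TensorProduct LinearMap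

namespace TensorProduct

variable {R M N N' P Q : Type*} [CommSemiring R] [AddCommMonoid M] [AddCommMonoid N]
  [AddCommMonoid N'] [AddCommMonoid P] [AddCommMonoid Q] [Module R M] [Module R N]
  [Module R N'] [Module R P] [Module R Q]

theorem map_eq_add_of_prod_right (f : M →ₗ[R] P) (g : N × N' →ₗ[R] Q) :
    map f g = lTensor P (g ∘ₗ inl R N N') ∘ₗ map f (fst R N N') +
      lTensor P (g ∘ₗ inr R N N') ∘ₗ map f (snd R N N') := by
  refine TensorProduct.ext' fun m x => ?_
  simp [← tmul_add, ← map_add]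

theorem map_apply_eq_lTensor_of_map_fst_eq_zero (f : M →ₗ[R] P) (g : N × N' →ₗ[R] Q)
    {t : M ⊗[R] (N × N')} (ht : map f (fst R N N') t = 0) :
    map f g t = lTensor P (g ∘ₗ inr R N N') (map f (snd R N N') t) := by
  rw [map_eq_add_of_prod_right, LinearMap.add_apply, comp_apply, ht, map_zero, zero_add,
    comp_apply]

end TensorProduct

theorem tensorSquareMul_tmul {k P : Type*} [Field k] [AddCommGroup P] [Module k P]
    (mul : P →ₗ[k] P →ₗ[k] P) (x y : P) :
    tensorSquareMul mul (x ⊗ₜ y) = map (mul x) (mul y) :=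
  rfl

theorem tensorAct_tmul {k A M : Type*} [Field k] [Ring A] [Algebra k A] [AddCommGroup M]
    [Module k M] (mul : (A × M) →ₗ[k] (A × M) →ₗ[k] (A × M)) (a b : A) :
    tensorAct mul (a ⊗ₜ b) = map (LinearMap.mul k A a) (leftAct mul b) :=
  rfl

section SquareZero

variable {k A M : Type*} [Field k] [Ring A] [Algebra k A] [AddCommGroup M] [Module k M]
  {mul : (A × M) →ₗ[k] (A × M) →ₗ[k] (A × M)}

theorem mul_inl_inr_eq (h_p_mul : ∀ x y, (mul x y).1 = x.1 * y.1) (a : A) (m : M) :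
    mul (a, 0) (0, m) = (0, leftAct mul a m) :=
  Prod.ext (by simp [h_p_mul]) rfl

theorem mul_inr_inl_eq (h_p_mul : ∀ x y, (mul x y).1 = x.1 * y.1) (m : M) (a : A) :
    mul (0, m) (a, 0) = (0, rightAct mul m a) :=
  Prod.ext (by simp [h_p_mul]) rfl

theorem snd_mul_inr (h_sq_mul : ∀ m m' : M, mul ((0 : A), m) ((0 : A), m') = 0)
    (x : A × M) (m : M) : (mul x (0, m)).2 = leftAct mul x.1 m := by
  conv_lhs => rw [← Prod.fst_add_snd x, map_add, LinearMap.add_apply, h_sq_mul, add_zero]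
  rfl

theorem snd_inr_mul (h_sq_mul : ∀ m m' : M, mul ((0 : A), m) ((0 : A), m') = 0)
    (m : M) (x : A × M) : (mul (0, m) x).2 = rightAct mul m x.1 := by
  conv_lhs => rw [← Prod.fst_add_snd x, map_add, h_sq_mul, add_zero]
  rfl

theorem leftAct_mul (h_assoc : ∀ x y z, mul (mul x y) z = mul x (mul y z))
    (h_p_mul : ∀ x y, (mul x y).1 = x.1 * y.1)
    (h_sq_mul : ∀ m m' : M, mul ((0 : A), m) ((0 : A), m') = 0) (a b : A) (m : M) :
    leftAct mul (a * b) m = leftAct mul a (leftAct mul b m) := by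
  calc leftAct mul (a * b) m
      = (mul (mul (a, 0) (b, 0)) (0, m)).2 := by rw [snd_mul_inr h_sq_mul, h_p_mul]
    _ = (mul (a, 0) (0, leftAct mul b m)).2 := by rw [h_assoc, mul_inl_inr_eq h_p_mul]
    _ = leftAct mul a (leftAct mul b m) := rfl

theorem rightAct_mul (h_assoc : ∀ x y z, mul (mul x y) z = mul x (mul y z))
    (h_p_mul : ∀ x y, (mul x y).1 = x.1 * y.1)
    (h_sq_mul : ∀ m m' : M, mul ((0 : A), m) ((0 : A), m') = 0) (a b : A) (m : M) :
    rightAct mul m (a * b) = rightAct mul (rightAct mul m a) b := by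
  calc rightAct mul m (a * b)
      = (mul (0, m) (mul (a, 0) (b, 0))).2 := by rw [snd_inr_mul h_sq_mul, h_p_mul]
    _ = (mul (0, rightAct mul m a) (b, 0)).2 := by rw [← h_assoc, mul_inr_inl_eq h_p_mul]
    _ = rightAct mul (rightAct mul m a) b := rfl

theorem leftAct_rightAct_comm (h_assoc : ∀ x y z, mul (mul x y) z = mul x (mul y z))
    (h_p_mul : ∀ x y, (mul x y).1 = x.1 * y.1) (a b : A) (m : M) :
    leftAct mul a (rightAct mul m b) = rightAct mul (leftAct mul a m) b := by
  calc leftAct mul a (rightAct mul m b)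
      = (mul (a, 0) (mul (0, m) (b, 0))).2 := by rw [mul_inr_inl_eq h_p_mul]; rfl
    _ = rightAct mul (leftAct mul a m) b := by rw [← h_assoc, mul_inl_inr_eq h_p_mul]; rfl

theorem map_fst_snd_tensorSquareMul (h_p_mul : ∀ x y, (mul x y).1 = x.1 * y.1)
    (h_sq_mul : ∀ m m' : M, mul ((0 : A), m) ((0 : A), m') = 0)
    (s : (A × M) ⊗[k] (A × M)) {t : (A × M) ⊗[k] (A × M)}
    (ht : map (fst k A M) (fst k A M) t = 0) :
    map (fst k A M) (snd k A M) (tensorSquareMul mul s t) =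
      tensorAct mul (map (fst k A M) (fst k A M) s) (map (fst k A M) (snd k A M) t) := by
  induction s using TensorProduct.induction_on with
  | zero => simp
  | add s s' hs hs' => simp only [map_add, LinearMap.add_apply, hs, hs']
  | tmul x y =>
    have hx : fst k A M ∘ₗ mul x = LinearMap.mul k A x.1 ∘ₗ fst k A M :=
      LinearMap.ext (h_p_mul x)
    have hy : (snd k A M ∘ₗ mul y) ∘ₗ inr k A M = leftAct mul y.1 :=
      LinearMap.ext (snd_mul_inr h_sq_mul y)
    rw [tensorSquareMul_tmul, map_tmul, tensorAct_tmul, ← LinearMap.comp_apply, ← map_comp, hx,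
      ← rTensor_map, map_apply_eq_lTensor_of_map_fst_eq_zero _ _ ht, hy, ← LinearMap.comp_apply,
      rTensor_comp_lTensor]
    rfl

end SquareZero

section SquareZeroCoalgebra

variable {k A M : Type*} [Field k] [Ring A] [Bialgebra k A] [AddCommGroup M] [Module k M]
  {com : (A × M) →ₗ[k] ((A × M) ⊗[k] (A × M))}

theorem map_fst_fst_com_inr (h_p_com : ∀ x,
      map (fst k A M) (fst k A M) (com x) = (Coalgebra.comul : A →ₗ[k] A ⊗[k] A) x.1)
    (m : M) : map (fst k A M) (fst k A M) (com (0, m)) = 0 := by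
  rw [h_p_com, map_zero]

theorem leftCoact_coassoc (h_p_com : ∀ x,
      map (fst k A M) (fst k A M) (com x) = (Coalgebra.comul : A →ₗ[k] A ⊗[k] A) x.1)
    (h_coassoc : ∀ x, TensorProduct.assoc k (A × M) (A × M) (A × M)
      (rTensor (A × M) com (com x)) = lTensor (A × M) com (com x)) (m : M) :
    TensorProduct.assoc k A A M (rTensor M Coalgebra.comul (leftCoact com m)) =
      lTensor A (leftCoact com) (leftCoact com m) := by
  have hcomul : map (fst k A M) (fst k A M) ∘ₗ com = Coalgebra.comul ∘ₗ fst k A M :=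
    LinearMap.ext h_p_com
  have key := congrArg (map (fst k A M) (map (fst k A M) (snd k A M))) (h_coassoc (0, m))
  rwa [map_map_assoc, map_rTensor, hcomul, ← rTensor_map, map_lTensor,
    map_apply_eq_lTensor_of_map_fst_eq_zero _ (map (fst k A M) (snd k A M) ∘ₗ com)
      (map_fst_fst_com_inr h_p_com m)] at key

theorem leftCoact_counit {cou : (A × M) →ₗ[k] k}
    (h_counit_l : ∀ x, TensorProduct.lid k (A × M) (rTensor (A × M) cou (com x)) = x)
    (h_p_cou : ∀ x, cou x = (Coalgebra.counit : A →ₗ[k] k) x.1) (m : M) :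
    TensorProduct.lid k M (rTensor M Coalgebra.counit (leftCoact com m)) = m := by
  have hsnd : ∀ t : (A × M) ⊗[k] (A × M), (TensorProduct.lid k (A × M) (rTensor _ cou t)).2 =
      TensorProduct.lid k M (rTensor M Coalgebra.counit (map (fst k A M) (snd k A M) t)) := by
    intro t
    induction t using TensorProduct.induction_on with
    | zero => simp
    | tmul x y => simp [h_p_cou]
    | add t t' ht ht' => simp only [map_add, Prod.snd_add, ht, ht']
  exact (hsnd (com (0, m))).symm.trans (congrArg Prod.snd (h_counit_l (0, m)))

theorem leftCoact_leftAct {mul : (A × M) →ₗ[k] (A × M) →ₗ[k] (A × M)}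
    (h_p_mul : ∀ x y, (mul x y).1 = x.1 * y.1)
    (h_sq_mul : ∀ m m' : M, mul ((0 : A), m) ((0 : A), m') = 0)
    (h_com_mul : ∀ x y, com (mul x y) = tensorSquareMul mul (com x) (com y))
    (h_p_com : ∀ x,
      map (fst k A M) (fst k A M) (com x) = (Coalgebra.comul : A →ₗ[k] A ⊗[k] A) x.1)
    (a : A) (m : M) :
    leftCoact com (leftAct mul a m) =
      tensorAct mul ((Coalgebra.comul : A →ₗ[k] A ⊗[k] A) a) (leftCoact com m) := by
  calc leftCoact com (leftAct mul a m)
      = map (fst k A M) (snd k A M) (com (mul (a, 0) (0, m))) := by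
        rw [mul_inl_inr_eq h_p_mul]; rfl
    _ = tensorAct mul (map (fst k A M) (fst k A M) (com (a, 0))) (leftCoact com m) := by
        rw [h_com_mul, map_fst_snd_tensorSquareMul h_p_mul h_sq_mul _
          (map_fst_fst_com_inr h_p_com m)]
        rfl
    _ = tensorAct mul (Coalgebra.comul a) (leftCoact com m) := by rw [h_p_com]

end SquareZeroCoalgebra

theorem square_zero_bialgebra_extension_gives_tetramodule_general
    (k A M : Type*) [Field k] [Ring A] [Bialgebra k A]
    [AddCommGroup M] [Module k M]
    -- a bialgebra structure on A ⊕ M: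
    (mul : (A × M) →ₗ[k] (A × M) →ₗ[k] (A × M))
    (com : (A × M) →ₗ[k] ((A × M) ⊗[k] (A × M)))
    (cou : (A × M) →ₗ[k] k)
    (h_assoc : ∀ x y z, mul (mul x y) z = mul x (mul y z))
    (h_one_l : ∀ x, mul ((1 : A), (0 : M)) x = x)
    (h_one_r : ∀ x, mul x ((1 : A), (0 : M)) = x)
    (h_coassoc : ∀ x,
      (TensorProduct.assoc k (A × M) (A × M) (A × M))
          ((LinearMap.rTensor (A × M) com) (com x)) =
        (LinearMap.lTensor (A × M) com) (com x))
    (h_counit_l : ∀ x,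
      (TensorProduct.lid k (A × M)) ((LinearMap.rTensor (A × M) cou) (com x)) = x)
    -- bialgebra compatibility: com and cou are multiplicative
    (h_com_mul : ∀ x y, com (mul x y) = tensorSquareMul mul (com x) (com y))
    -- p = pr_A is a bialgebra morphism
    (h_p_mul : ∀ x y, (mul x y).1 = x.1 * y.1)
    (h_p_com : ∀ x,
      (TensorProduct.map (LinearMap.fst k A M) (LinearMap.fst k A M)) (com x) =
        (Coalgebra.comul : A →ₗ[k] A ⊗[k] A) x.1)
    (h_p_cou : ∀ x, cou x = (Coalgebra.counit : A →ₗ[k] k) x.1)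
    -- the square-zero (abelian group object) conditions
    (h_sq_mul : ∀ m m' : M, mul ((0 : A), m) ((0 : A), m') = 0) :
    -- M is a unital A-bimodule
    ((∀ m : M, leftAct mul 1 m = m) ∧
     (∀ m : M, rightAct mul m 1 = m) ∧
     (∀ (a b : A) (m : M), leftAct mul (a * b) m = leftAct mul a (leftAct mul b m)) ∧
     (∀ (a b : A) (m : M), rightAct mul m (a * b) = rightAct mul (rightAct mul m a) b) ∧
     (∀ (a b : A) (m : M),
        leftAct mul a (rightAct mul m b) = rightAct mul (leftAct mul a m) b)) ∧
    -- M is a (left) A-comodule (and dually a bicomodule)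
    ((∀ m : M,
      (TensorProduct.assoc k A A M)
          ((LinearMap.rTensor M (Coalgebra.comul : A →ₗ[k] A ⊗[k] A))
            (leftCoact com m)) =
        (LinearMap.lTensor A (leftCoact com)) (leftCoact com m)) ∧
     (∀ m : M,
      (TensorProduct.lid k M)
        ((LinearMap.rTensor M (Coalgebra.counit : A →ₗ[k] k))
          (leftCoact com m)) = m)) ∧
    -- the left action and left coaction satisfy the tetramodule compatibility
    (∀ (a : A) (m : M),
      leftCoact com (leftAct mul a m) =
        tensorAct mul ((Coalgebra.comul : A →ₗ[k] A ⊗[k] A) a)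
          (leftCoact com m)) := by
  refine ⟨⟨fun m => congrArg Prod.snd (h_one_l _), fun m => congrArg Prod.snd (h_one_r _),
    leftAct_mul h_assoc h_p_mul h_sq_mul, rightAct_mul h_assoc h_p_mul h_sq_mul,
    leftAct_rightAct_comm h_assoc h_p_mul⟩,
    ⟨leftCoact_coassoc h_p_com h_coassoc, leftCoact_counit h_counit_l h_p_cou⟩,
    leftCoact_leftAct h_p_mul h_sq_mul h_com_mul h_p_com⟩

/-- Let `A` be a bialgebra and `M` a vector space such that `A ⊕ M`
carries a bialgebra structure for which `p : A ⊕ M → A` is a bialgebra morphism and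
an abelian group object over `A` (the restricted multiplication `M ⊗ M → M` and
comultiplication `M → M ⊗ M` vanish).  Then `M` inherits an `A`-bimodule structure
and an `A`-bicomodule structure, and the left action is compatible with the left
coaction via the bialgebra axiom: `M` is an `A`-tetramodule. -/
theorem square_zero_bialgebra_extension_gives_tetramodule
    (k A M : Type*) [Field k] [CharZero k] [Ring A] [Bialgebra k A]
    [AddCommGroup M] [Module k M]
    -- a bialgebra structure on A ⊕ M:
    (mul : (A × M) →ₗ[k] (A × M) →ₗ[k] (A × M))
    (com : (A × M) →ₗ[k] ((A × M) ⊗[k] (A × M)))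
    (cou : (A × M) →ₗ[k] k)
    (h_assoc : ∀ x y z, mul (mul x y) z = mul x (mul y z))
    (h_one_l : ∀ x, mul ((1 : A), (0 : M)) x = x)
    (h_one_r : ∀ x, mul x ((1 : A), (0 : M)) = x)
    (h_coassoc : ∀ x,
      (TensorProduct.assoc k (A × M) (A × M) (A × M))
          ((LinearMap.rTensor (A × M) com) (com x)) =
        (LinearMap.lTensor (A × M) com) (com x))
    (h_counit_l : ∀ x,
      (TensorProduct.lid k (A × M)) ((LinearMap.rTensor (A × M) cou) (com x)) = x)
    (h_counit_r : ∀ x,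
      (TensorProduct.rid k (A × M)) ((LinearMap.lTensor (A × M) cou) (com x)) = x)
    -- bialgebra compatibility: com and cou are multiplicative
    (h_com_mul : ∀ x y, com (mul x y) = tensorSquareMul mul (com x) (com y))
    (h_com_one : com ((1 : A), (0 : M)) = ((1 : A), (0 : M)) ⊗ₜ[k] ((1 : A), (0 : M)))
    (h_cou_mul : ∀ x y, cou (mul x y) = cou x * cou y)
    (h_cou_one : cou ((1 : A), (0 : M)) = 1)
    -- p = pr_A is a bialgebra morphism
    (h_p_mul : ∀ x y, (mul x y).1 = x.1 * y.1)
    (h_p_com : ∀ x,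
      (TensorProduct.map (LinearMap.fst k A M) (LinearMap.fst k A M)) (com x) =
        (Coalgebra.comul : A →ₗ[k] A ⊗[k] A) x.1)
    (h_p_cou : ∀ x, cou x = (Coalgebra.counit : A →ₗ[k] k) x.1)
    -- the square-zero (abelian group object) conditions
    (h_sq_mul : ∀ m m' : M, mul ((0 : A), m) ((0 : A), m') = 0)
    (h_sq_com : ∀ m : M,
      (TensorProduct.map (LinearMap.snd k A M) (LinearMap.snd k A M))
        (com ((0 : A), m)) = 0) :
    -- M is a unital A-bimodule
    ((∀ m : M, leftAct mul 1 m = m) ∧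
     (∀ m : M, rightAct mul m 1 = m) ∧
     (∀ (a b : A) (m : M), leftAct mul (a * b) m = leftAct mul a (leftAct mul b m)) ∧
     (∀ (a b : A) (m : M), rightAct mul m (a * b) = rightAct mul (rightAct mul m a) b) ∧
     (∀ (a b : A) (m : M),
        leftAct mul a (rightAct mul m b) = rightAct mul (leftAct mul a m) b)) ∧
    -- M is a (left) A-comodule (and dually a bicomodule)
    ((∀ m : M,
      (TensorProduct.assoc k A A M)
          ((LinearMap.rTensor M (Coalgebra.comul : A →ₗ[k] A ⊗[k] A))
            (leftCoact com m)) =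
        (LinearMap.lTensor A (leftCoact com)) (leftCoact com m)) ∧
     (∀ m : M,
      (TensorProduct.lid k M)
        ((LinearMap.rTensor M (Coalgebra.counit : A →ₗ[k] k))
          (leftCoact com m)) = m)) ∧
    -- the left action and left coaction satisfy the tetramodule compatibility
    (∀ (a : A) (m : M),
      leftCoact com (leftAct mul a m) =
        tensorAct mul ((Coalgebra.comul : A →ₗ[k] A ⊗[k] A) a)
          (leftCoact com m)) :=
  square_zero_bialgebra_extension_gives_tetramodule_general k A M mul com cou h_assoc h_one_l
    h_one_r h_coassoc h_counit_l h_com_mul h_p_mul h_p_com h_p_cou h_sq_mul
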